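/- arXiv:2605.01919 — 4 statements merged into one kernel-verified Lean document; each statement's English description precedes it below -/
import Mathlib

section
/- Let d ≥ 1 and let (p₁, s₁), …, (pₙ, sₙ) be a finite family of signed distance samples in ℝ^d. If the family is realizable, then it is geometrically consistent: (i) for all i, j with sᵢ > 0 > sⱼ the open balls B̊(pᵢ, |sᵢ|) and B̊(pⱼ, |sⱼ|) are disjoint, and (ii) for every i there exists a point q with ‖q − pᵢ‖ = |sᵢ| and ‖q − pⱼ‖ ≥ |sⱼ| for all j ≠ i. -/
/-!
A ball centred at `x` of radius `infDist x (frontier Z)` misses `frontier Z`; being connected, it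
lies entirely on the side of `Z` containing its centre. So balls around samples of opposite signs
lie in `Z` and in `Zᶜ` respectively. For the sphere condition, take a point `q` of `frontier Z`
nearest to `pᵢ`: every sample `pⱼ` has `|sⱼ| = infDist pⱼ (frontier Z) ≤ dist q pⱼ`.
-/

open Classical in
/-- A finite family of signed distance samples `(p i, s i)` in `ℝ^d` is *realizable*
(a valid discrete SDF) if there is a closed set `Z ⊆ ℝ^d` with nonempty frontier `Ω = ∂Z`
such that each `s i` is the signed distance from `p i` to `Ω` (negative inside `Z`). -/
def Realizable {d : ℕ} {ι : Type} (p : ι → EuclideanSpace ℝ (Fin d)) (s : ι → ℝ) : Prop :=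
  ∃ Z : Set (EuclideanSpace ℝ (Fin d)), IsClosed Z ∧ (frontier Z).Nonempty ∧
    ∀ i, s i = if p i ∈ Z then -Metric.infDist (p i) (frontier Z)
               else Metric.infDist (p i) (frontier Z)

/-- A family of signed distance samples is *geometrically consistent* if
(i) the open balls of differently signed samples are disjoint, and
(ii) every sphere has an uncovered point. -/
def GeomConsistent {d : ℕ} {ι : Type} (p : ι → EuclideanSpace ℝ (Fin d)) (s : ι → ℝ) : Prop :=
  (∀ i j, 0 < s i → s j < 0 →
      Disjoint (Metric.ball (p i) |s i|) (Metric.ball (p j) |s j|)) ∧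
  (∀ i, ∃ q : EuclideanSpace ℝ (Fin d),
      dist q (p i) = |s i| ∧ ∀ j, j ≠ i → |s j| ≤ dist q (p j))

open Metric Set

theorem IsPreconnected.subset_of_disjoint_frontier {X : Type*} [TopologicalSpace X]
    {s Z : Set X} (hs : IsPreconnected s) (hsZ : Disjoint s (frontier Z))
    (hne : (s ∩ Z).Nonempty) : s ⊆ Z := by
  have mem_interior : ∀ x ∈ s, x ∈ closure Z → x ∈ interior Z := fun x hxs hxZ => by
    by_contra hx
    exact hsZ.notMem_of_mem_left hxs ⟨hxZ, hx⟩
  obtain ⟨x, hxs, hxZ⟩ := hne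
  refine (hs.subset_of_closure_inter_subset isOpen_interior
    ⟨x, hxs, mem_interior x hxs (subset_closure hxZ)⟩ ?_).trans interior_subset
  rintro y ⟨hyZ, hys⟩
  exact mem_interior y hys (closure_mono interior_subset hyZ)

theorem Metric.ball_infDist_frontier_subset {E : Type*} [SeminormedAddCommGroup E]
    [NormedSpace ℝ E] {Z : Set E} {x : E} (hx : x ∈ Z) :
    ball x (infDist x (frontier Z)) ⊆ Z := by
  rcases (infDist_nonneg (x := x) (s := frontier Z)).eq_or_lt with h | h
  · simp [← h]
  · exact (convex_ball x _).isPreconnected.subset_of_disjoint_frontier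
      (subset_compl_iff_disjoint_right.mp ball_infDist_subset_compl) ⟨x, mem_ball_self h, hx⟩

section SignedDistance

variable {E : Type*} [PseudoMetricSpace E]

-- Classical decidability, so that the `if` is the one in `Realizable` and unfolds to it.
open Classical in
noncomputable def signedInfDist (Z : Set E) (x : E) : ℝ :=
  if x ∈ Z then -infDist x (frontier Z) else infDist x (frontier Z)

variable {Z : Set E} {x : E}

theorem abs_signedInfDist : |signedInfDist Z x| = infDist x (frontier Z) := by
  unfold signedInfDist
  split_ifs <;> simp [abs_of_nonneg infDist_nonneg]

theorem notMem_of_signedInfDist_pos (h : 0 < signedInfDist Z x) : x ∉ Z := fun hx => by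
  simp only [signedInfDist, if_pos hx] at h
  linarith [infDist_nonneg (x := x) (s := frontier Z)]

theorem mem_of_signedInfDist_neg (h : signedInfDist Z x < 0) : x ∈ Z := by
  by_contra hx
  simp only [signedInfDist, if_neg hx] at h
  linarith [infDist_nonneg (x := x) (s := frontier Z)]

end SignedDistance

theorem disjoint_ball_signedInfDist {E : Type*} [SeminormedAddCommGroup E] [NormedSpace ℝ E]
    {Z : Set E} {x y : E} (hx : 0 < signedInfDist Z x) (hy : signedInfDist Z y < 0) :
    Disjoint (ball x |signedInfDist Z x|) (ball y |signedInfDist Z y|) := by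
  have hxZ : ball x |signedInfDist Z x| ⊆ Zᶜ := by
    rw [abs_signedInfDist, ← frontier_compl]
    exact ball_infDist_frontier_subset (notMem_of_signedInfDist_pos hx)
  have hyZ : ball y |signedInfDist Z y| ⊆ Z := by
    rw [abs_signedInfDist]
    exact ball_infDist_frontier_subset (mem_of_signedInfDist_neg hy)
  exact disjoint_compl_left.mono hxZ hyZ

theorem realizable_imp_geomConsistent_general (d : ℕ) (n : ℕ)
    (p : Fin n → EuclideanSpace ℝ (Fin d)) (s : Fin n → ℝ)
    (h : Realizable p s) : GeomConsistent p s := by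
  obtain ⟨Z, -, hΩ, hs⟩ := h
  replace hs : s = fun i => signedInfDist Z (p i) := funext hs
  subst hs
  refine ⟨fun i j hi hj => disjoint_ball_signedInfDist hi hj, fun i => ?_⟩
  obtain ⟨q, hqΩ, hq⟩ := isClosed_frontier.exists_infDist_eq_dist hΩ (p i)
  refine ⟨q, by rw [abs_signedInfDist, hq, dist_comm], fun j _ => ?_⟩
  rw [abs_signedInfDist, dist_comm]
  exact infDist_le_dist_of_mem hqΩ

/-- If a finite family of signed distance samples in `ℝ^d` (`d ≥ 1`) is realizable,
then it is geometrically consistent. -/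
theorem realizable_imp_geomConsistent (d : ℕ) (hd : 1 ≤ d) (n : ℕ)
    (p : Fin n → EuclideanSpace ℝ (Fin d)) (s : Fin n → ℝ)
    (h : Realizable p s) : GeomConsistent p s :=
  realizable_imp_geomConsistent_general d n p s h
end

section
/- Let (p₁, s₁), …, (pₙ, sₙ) be a geometrically consistent finite family of signed distance samples in ℝ², and let p ∈ ℝ² with p ≠ pᵢ for all i. Define the finite candidate set P = {p} ∪ T ∪ U, where T = { pᵢ + ε·|sᵢ|·(p − pᵢ)/‖p − pᵢ‖ : 1 ≤ i ≤ n, ε ∈ {−1, 1} } and U = { q ∈ ℝ² : there exist i ≠ j with ‖q − pᵢ‖ = |sᵢ| and ‖q − pⱼ‖ = |sⱼ|, and ‖q − pₖ‖ ≥ |sₖ| for all k }. Then there exist q ∈ P and ε ∈ {−1, 1} such that the family augmented by the sample (p, ε·‖q − p‖) is geometrically consistent. -/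
open Metric Filter Topology

section InnerProductSpace

variable {E : Type*} [NormedAddCommGroup E] [InnerProductSpace ℝ E]

lemma eq_of_isLocalMin_dist {q c : E} (h : IsLocalMin (fun x => dist x c) q) : q = c := by
  simpa using IsMinOn.of_isLocalMin_of_convex_univ h (convexOn_dist c convex_univ) c

lemma hasStrictFDerivAt_norm_sub_sq (a q : E) :
    HasStrictFDerivAt (fun x => ‖x - a‖ ^ 2) (2 • innerSL ℝ (q - a)) q := by
  simpa using (hasStrictFDerivAt_norm_sq (q - a)).comp q ((hasStrictFDerivAt_id q).sub_const a)

lemma exists_eq_add_smul_of_isLocalMinOn_sphere [CompleteSpace E] {a c q : E} (hca : c ≠ a)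
    (hmin : IsLocalMinOn (fun x => dist x c) (sphere a ‖q - a‖) q) :
    ∃ μ : ℝ, q = a + μ • (c - a) := by
  have hsphere : sphere a ‖q - a‖ = {x | ‖x - a‖ ^ 2 = ‖q - a‖ ^ 2} := by
    ext x; simp
  have hextr : IsLocalExtrOn (fun x => ‖x - c‖ ^ 2) {x | ‖x - a‖ ^ 2 = ‖q - a‖ ^ 2} q := by
    rw [← hsphere]
    refine Or.inl (hmin.mono fun x hx => ?_)
    simp only [dist_eq_norm] at hx
    exact pow_le_pow_left₀ (norm_nonneg _) hx 2
  -- Lagrange multipliers: the gradients `2 (q - a)` and `2 (q - c)` are linearly dependent.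
  obtain ⟨α, β, hαβ, hzero⟩ := hextr.exists_multipliers_of_hasStrictFDerivAt_1d
    (hasStrictFDerivAt_norm_sub_sq a q) (hasStrictFDerivAt_norm_sub_sq c q)
  set w := α • (q - a) + β • (q - c)
  have hw : w = 0 := by
    have := congrArg (fun L => L w) hzero
    rw [← inner_self_eq_zero (𝕜 := ℝ)]
    simp only [w, add_apply, smul_apply, coe_innerSL_apply, nsmul_eq_mul, Nat.cast_ofNat,
      smul_eq_mul, zero_apply, inner_add_left, real_inner_smul_left] at this ⊢
    linarith
  have hsplit : (α + β) • (q - a) = β • (c - a) := by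
    rw [← sub_eq_zero, ← hw]
    module
  have hαβ' : α + β ≠ 0 := by
    intro h0
    have hβ : β = 0 := by
      simpa [h0, sub_ne_zero.2 hca, eq_comm] using hsplit
    exact hαβ (by simp [hβ, show α = 0 by linarith])
  refine ⟨β / (α + β), ?_⟩
  rw [div_eq_inv_mul, mul_smul, ← hsplit, smul_smul, inv_mul_cancel₀ hαβ', one_smul]
  abel

lemma exists_sign_eq_add_smul {a c q : E} {μ : ℝ} (hca : c ≠ a) (hq : q = a + μ • (c - a)) :
    ∃ ε : ℝ, (ε = 1 ∨ ε = -1) ∧ q = a + ((ε * ‖q - a‖) / ‖c - a‖) • (c - a) := by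
  have hd : ‖c - a‖ ≠ 0 := norm_ne_zero_iff.2 (sub_ne_zero.2 hca)
  have hnorm : ‖q - a‖ = |μ| * ‖c - a‖ := by
    rw [hq, add_sub_cancel_left, norm_smul, Real.norm_eq_abs]
  rcases le_or_gt 0 μ with hμ | hμ
  · refine ⟨1, Or.inl rfl, ?_⟩
    rwa [hnorm, abs_of_nonneg hμ, one_mul, mul_div_cancel_right₀ _ hd]
  · refine ⟨-1, Or.inr rfl, ?_⟩
    rwa [hnorm, abs_of_neg hμ, neg_one_mul, neg_mul, neg_neg, mul_div_cancel_right₀ _ hd]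

end InnerProductSpace

def uncoveredRegion {α ι : Type*} [MetricSpace α] (p : ι → α) (s : ι → ℝ) : Set α :=
  {x | ∀ j, |s j| ≤ dist x (p j)}

section UncoveredRegion

variable {α ι : Type*} [MetricSpace α] {p : ι → α} {s : ι → ℝ}

lemma isClosed_uncoveredRegion : IsClosed (uncoveredRegion p s) := by
  simp only [uncoveredRegion, Set.ofPred_forall]
  exact isClosed_iInter fun j => isClosed_le continuous_const (continuous_id.dist continuous_const)

lemma mem_uncoveredRegion_of_forall_ne {q : α} {i : ι} (hi : dist q (p i) = |s i|)
    (hj : ∀ j, j ≠ i → |s j| ≤ dist q (p j)) : q ∈ uncoveredRegion p s := by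
  intro j
  by_cases h : j = i
  · exact h ▸ hi.ge
  · exact hj j h

lemma eventually_forall_lt_dist [Finite ι] {q : α} {P : ι → Prop}
    (h : ∀ j, P j → |s j| < dist q (p j)) : ∀ᶠ x in 𝓝 q, ∀ j, P j → |s j| < dist x (p j) :=
  eventually_all.2 fun j => eventually_imp_distrib_left.2 fun hj =>
    continuousAt_const.eventually_lt (continuous_id.dist continuous_const).continuousAt (h j hj)

lemma disjoint_ball_of_isMinOn_dist {S : Set α} {pt q : α}
    (hmin : IsMinOn (fun x => dist x pt) S q) : Disjoint (ball pt (dist q pt)) S :=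
  Set.disjoint_left.2 fun x hx hxS =>
    (show dist q pt ≤ dist x pt from hmin hxS).not_gt (mem_ball.1 hx)

end UncoveredRegion

/-- The paper's candidate set `P = {pt} ∪ T ∪ U`. -/
def growCandidates {E ι : Type*} [NormedAddCommGroup E] [InnerProductSpace ℝ E]
    (p : ι → E) (s : ι → ℝ) (pt : E) : Set E :=
  {q | q = pt ∨
    (∃ i, ∃ ε : ℝ, (ε = 1 ∨ ε = -1) ∧ q = p i + ((ε * |s i|) / ‖pt - p i‖) • (pt - p i)) ∨
    (∃ i j, i ≠ j ∧ dist q (p i) = |s i| ∧ dist q (p j) = |s j| ∧ ∀ k, |s k| ≤ dist q (p k))}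

lemma mem_growCandidates_of_isMinOn {E ι : Type*} [NormedAddCommGroup E] [InnerProductSpace ℝ E]
    [CompleteSpace E] [Finite ι] {p : ι → E} {s : ι → ℝ} {pt q : E} (hpt : ∀ i, pt ≠ p i)
    (hqF : q ∈ uncoveredRegion p s) (hmin : IsMinOn (fun x => dist x pt) (uncoveredRegion p s) q) :
    q ∈ growCandidates p s pt := by
  by_cases hU : ∃ i j, i ≠ j ∧ dist q (p i) = |s i| ∧ dist q (p j) = |s j|
  · obtain ⟨i, j, hij, hi, hj⟩ := hU
    exact Or.inr (Or.inr ⟨i, j, hij, hi, hj, hqF⟩)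
  push Not at hU
  by_cases hT : ∃ i, dist q (p i) = |s i|
  · obtain ⟨i, hi⟩ := hT
    have hstrict : ∀ j, j ≠ i → |s j| < dist q (p j) := fun j hj =>
      (hqF j).lt_of_ne fun h => hU i j (Ne.symm hj) hi h.symm
    have hloc : IsLocalMinOn (fun x => dist x pt) (sphere (p i) ‖q - p i‖) q := by
      filter_upwards [nhdsWithin_le_nhds (eventually_forall_lt_dist hstrict),
        self_mem_nhdsWithin] with x hx hxS
      refine hmin (mem_uncoveredRegion_of_forall_ne ?_ fun j hj => (hx j hj).le)
      rwa [mem_sphere, ← dist_eq_norm, hi] at hxS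
    obtain ⟨μ, hμ⟩ := exists_eq_add_smul_of_isLocalMinOn_sphere (hpt i) hloc
    have hsign := exists_sign_eq_add_smul (hpt i) hμ
    rw [← dist_eq_norm, hi] at hsign
    exact Or.inr (Or.inl ⟨i, hsign⟩)
  · push Not at hT
    have hstrict : ∀ j, True → |s j| < dist q (p j) := fun j _ => (hqF j).lt_of_ne (hT j).symm
    refine Or.inl (eq_of_isLocalMin_dist ?_)
    filter_upwards [eventually_forall_lt_dist hstrict] with x hx
    exact hmin fun j => (hx j trivial).le

section GeomConsistent

variable {d : ℕ}

lemma GeomConsistent.uncoveredRegion_nonempty {ι : Type} {p : ι → EuclideanSpace ℝ (Fin d)}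
    {s : ι → ℝ} (h : GeomConsistent p s) : (uncoveredRegion p s).Nonempty := by
  cases isEmpty_or_nonempty ι with
  | inl _ => exact ⟨0, isEmptyElim⟩
  | inr hι =>
    obtain ⟨q, hqi, hqj⟩ := h.2 (Classical.arbitrary ι)
    exact ⟨q, mem_uncoveredRegion_of_forall_ne hqi hqj⟩

lemma GeomConsistent.disjoint_or_disjoint_of_isPreconnected {ι : Type}
    {p : ι → EuclideanSpace ℝ (Fin d)} {s : ι → ℝ} (h : GeomConsistent p s)
    {B : Set (EuclideanSpace ℝ (Fin d))} (hB : IsPreconnected B)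
    (hBF : Disjoint B (uncoveredRegion p s)) :
    (∀ j, s j < 0 → Disjoint B (ball (p j) |s j|)) ∨
      (∀ i, 0 < s i → Disjoint (ball (p i) |s i|) B) := by
  set U := ⋃ i, ⋃ (_ : 0 < s i), ball (p i) |s i|
  set V := ⋃ j, ⋃ (_ : s j < 0), ball (p j) |s j|
  have hUV : Disjoint U V := by
    simp only [U, V, Set.disjoint_iUnion_left, Set.disjoint_iUnion_right]
    exact fun j hj i hi => h.1 i j hi hj
  have hcover : B ⊆ U ∪ V := by
    intro x hxB
    obtain ⟨j, hj⟩ : ∃ j, dist x (p j) < |s j| := by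
      by_contra! hx
      exact hBF.notMem_of_mem_left hxB hx
    rcases lt_trichotomy (s j) 0 with hneg | hzero | hpos
    · exact Or.inr (Set.mem_iUnion₂.2 ⟨j, hneg, hj⟩)
    · rw [hzero, abs_zero] at hj
      exact absurd hj dist_nonneg.not_gt
    · exact Or.inl (Set.mem_iUnion₂.2 ⟨j, hpos, hj⟩)
  rcases hB.subset_or_subset (isOpen_iUnion fun _ => isOpen_iUnion fun _ => isOpen_ball)
    (isOpen_iUnion fun _ => isOpen_iUnion fun _ => isOpen_ball) hUV hcover with hBU | hBV
  · exact Or.inl fun j hj => Set.disjoint_left.2 fun x hxB hxj =>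
      hUV.notMem_of_mem_left (hBU hxB) (Set.mem_iUnion₂.2 ⟨j, hj, hxj⟩)
  · exact Or.inr fun i hi => Set.disjoint_left.2 fun x hxi hxB =>
      hUV.notMem_of_mem_left (Set.mem_iUnion₂.2 ⟨i, hi, hxi⟩) (hBV hxB)

lemma GeomConsistent.snoc {n : ℕ} {p : Fin n → EuclideanSpace ℝ (Fin d)} {s : Fin n → ℝ}
    (h : GeomConsistent p s) {pt : EuclideanSpace ℝ (Fin d)} {v : ℝ}
    (hpos : 0 < v → ∀ j, s j < 0 → Disjoint (ball pt |v|) (ball (p j) |s j|))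
    (hneg : v < 0 → ∀ i, 0 < s i → Disjoint (ball (p i) |s i|) (ball pt |v|))
    (hF : Disjoint (ball pt |v|) (uncoveredRegion p s))
    (hq : ∃ q ∈ uncoveredRegion p s, dist q pt = |v|) :
    GeomConsistent (Fin.snoc p pt) (Fin.snoc s v) := by
  refine ⟨fun i j hi hj => ?_, fun i => ?_⟩
  · induction i using Fin.lastCases <;> induction j using Fin.lastCases <;>
      simp only [Fin.snoc_last, Fin.snoc_castSucc] at hi hj ⊢
    · exact absurd (hi.trans hj) (lt_irrefl 0)
    · exact hpos hi _ hj
    · exact hneg hj _ hi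
    · exact h.1 _ _ hi hj
  · induction i using Fin.lastCases with
    | last =>
      obtain ⟨q, hqF, hqd⟩ := hq
      refine ⟨q, by simpa using hqd, fun j hj => ?_⟩
      induction j using Fin.lastCases with
      | last => exact absurd rfl hj
      | cast j => simpa using hqF j
    | cast i =>
      obtain ⟨q, hqi, hqj⟩ := h.2 i
      refine ⟨q, by simpa using hqi, fun j hj => ?_⟩
      induction j using Fin.lastCases with
      | last =>
        simpa [mem_ball] using hF.notMem_of_mem_right (mem_uncoveredRegion_of_forall_ne hqi hqj)
      | cast j => simpa using hqj j (fun hji => hj (hji ▸ rfl))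

end GeomConsistent

/-- **Grow-to point validity in ℝ².** Given a geometrically consistent family and a new
point `pt` distinct from all sample points, there is a candidate grow-to point `q` in
`P = {pt} ∪ T ∪ U` (tangent points and uncovered intersection points) and a sign `ε`
such that augmenting the family by `(pt, ε·‖q − pt‖)` is geometrically consistent. -/
theorem grow_to_point_validity_2d (n : ℕ)
    (p : Fin n → EuclideanSpace ℝ (Fin 2)) (s : Fin n → ℝ)
    (h : GeomConsistent p s) (pt : EuclideanSpace ℝ (Fin 2))
    (hpt : ∀ i, pt ≠ p i) :
    ∃ q : EuclideanSpace ℝ (Fin 2),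
      (q = pt ∨
        (∃ i : Fin n, ∃ ε : ℝ, (ε = 1 ∨ ε = -1) ∧
          q = p i + ((ε * |s i|) / ‖pt - p i‖) • (pt - p i)) ∨
        (∃ i j : Fin n, i ≠ j ∧ dist q (p i) = |s i| ∧ dist q (p j) = |s j| ∧
          ∀ k, |s k| ≤ dist q (p k))) ∧
      ∃ ε : ℝ, (ε = 1 ∨ ε = -1) ∧
        GeomConsistent (Fin.snoc p pt) (Fin.snoc s (ε * ‖q - pt‖)) := by
  obtain ⟨q, hqF, hq⟩ :=
    isClosed_uncoveredRegion.exists_infDist_eq_dist h.uncoveredRegion_nonempty pt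
  have hmin : IsMinOn (fun x => dist x pt) (uncoveredRegion p s) q := fun x hx => by
    show dist q pt ≤ dist x pt
    rw [dist_comm q, dist_comm x, ← hq]
    exact infDist_le_dist_of_mem hx
  have hball : Disjoint (ball pt ‖q - pt‖) (uncoveredRegion p s) := by
    simpa only [dist_eq_norm] using disjoint_ball_of_isMinOn_dist hmin
  refine ⟨q, mem_growCandidates_of_isMinOn hpt hqF hmin, ?_⟩
  rcases h.disjoint_or_disjoint_of_isPreconnected (convex_ball pt _).isPreconnected hball
    with hneg | hpos
  · refine ⟨1, Or.inl rfl, h.snoc ?_ ?_ ?_ ⟨q, hqF, ?_⟩⟩ <;> rw [one_mul, abs_norm]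
    exacts [fun _ => hneg, fun hv => absurd hv (norm_nonneg _).not_gt, hball, dist_eq_norm q pt]
  · refine ⟨-1, Or.inr rfl, h.snoc ?_ ?_ ?_ ⟨q, hqF, ?_⟩⟩ <;> rw [neg_one_mul, abs_neg, abs_norm]
    exacts [fun hv => absurd hv (neg_nonpos.2 (norm_nonneg _)).not_gt, fun _ => hpos, hball,
      dist_eq_norm q pt]
end

section
/- Let d = 2 or d = 3, let (p₁, s₁), …, (pₙ, sₙ) be a realizable finite family of signed distance samples in ℝ^d, and let q₁, …, qₘ ∈ ℝ^d be further points. For each j, suppose s*ⱼ ∈ ℝ is such that the family (p₁, s₁), …, (pₙ, sₙ) augmented by the single sample (qⱼ, s*ⱼ) is realizable, and |s*ⱼ| ≤ |s| for every s ∈ ℝ for which the family augmented by the single sample (qⱼ, s) is realizable (i.e. s*ⱼ is a minimum valid value at qⱼ). Then the complete family (p₁, s₁), …, (pₙ, sₙ), (q₁, s*₁), …, (qₘ, s*ₘ) is realizable. -/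
/-!
Let `Z₀` realize the samples `(pᵢ, sᵢ)` and `Zⱼ` realize them together with `(qⱼ, s*ⱼ)`. The
closed set `(Z₀ ∩ ⋂ Zⱼ) ∪ ∂Z₀ ∪ ⋃ ∂Zⱼ` has frontier `∂Z₀ ∪ ⋃ ∂Zⱼ`. Each of its points lies on
the frontier of a realizer of the `(pᵢ, sᵢ)`, hence is at distance at least `|sᵢ|` from `pᵢ`
and, by minimality, at least `|s*ⱼ|` from `qⱼ`; these distances are attained on `∂Z₀` and
`∂Zⱼ`. For the signs, a negative minimal value at `qⱼ` forces `qⱼ` into every realizer of the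
`(pᵢ, sᵢ)`: otherwise `qⱼ` could be added to that realizer, giving the valid value `0` at `qⱼ`.
-/

open Metric Set

section Topology

variable {X : Type*} [TopologicalSpace X]

theorem frontier_union_eq_of_interior_eq_empty {A K : Set X} (hA : IsClosed A) (hK : IsClosed K)
    (hKi : interior K = ∅) (hdisj : Disjoint K (interior A)) :
    frontier (A ∪ K) = frontier A ∪ K := by
  rw [(hA.union hK).frontier_eq, interior_union_isClosed_of_interior_empty hA hKi,
    hA.frontier_eq, union_sdiff_distrib, hdisj.sdiff_eq_left]

theorem frontier_iInter_subset_of_finite {ι : Type*} [Finite ι] (W : ι → Set X) :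
    frontier (⋂ k, W k) ⊆ ⋃ k, frontier (W k) := by
  rintro x ⟨hcl, hint⟩
  rw [interior_iInter_of_finite, mem_iInter, not_forall] at hint
  obtain ⟨k, hk⟩ := hint
  exact mem_iUnion.2 ⟨k, closure_mono (iInter_subset W k) hcl, hk⟩

theorem interior_iUnion_eq_empty_of_finite {ι : Type*} [Finite ι] {K : ι → Set X}
    (hc : ∀ k, IsClosed (K k)) (he : ∀ k, interior (K k) = ∅) :
    interior (⋃ k, K k) = ∅ := by
  classical
  cases nonempty_fintype ι
  suffices ∀ t : Finset ι, interior (⋃ k ∈ t, K k) = ∅ by simpa using this Finset.univ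
  intro t
  induction t using Finset.induction_on with
  | empty => simp
  | insert a t _ ih =>
    rw [Finset.set_biUnion_insert, interior_union_isClosed_of_interior_empty (hc a) ih, he a]

theorem frontier_iInter_union_iUnion_frontier {ι : Type*} [Finite ι] {W : ι → Set X}
    (hW : ∀ k, IsClosed (W k)) :
    frontier ((⋂ k, W k) ∪ ⋃ k, frontier (W k)) = ⋃ k, frontier (W k) := by
  have hdisj : Disjoint (⋃ k, frontier (W k)) (interior (⋂ k, W k)) :=
    disjoint_iUnion_left.2 fun k =>
      disjoint_sdiff_left.mono_right (interior_mono (iInter_subset W k))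
  rw [frontier_union_eq_of_interior_eq_empty (isClosed_iInter hW)
    (isClosed_iUnion_of_finite fun _ => isClosed_frontier)
    (interior_iUnion_eq_empty_of_finite (fun _ => isClosed_frontier)
      fun k => interior_frontier (hW k)) hdisj,
    union_eq_right.2 (frontier_iInter_subset_of_finite W)]

theorem IsClosed.frontier_union_singleton [T1Space X] {Z : Set X} (hZ : IsClosed Z) {x : X}
    [(nhdsWithin x {x}ᶜ).NeBot] (hx : x ∉ interior Z) :
    frontier (Z ∪ {x}) = frontier Z ∪ {x} :=
  frontier_union_eq_of_interior_eq_empty hZ isClosed_singleton (interior_singleton x)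
    (disjoint_singleton_left.2 hx)

theorem nontrivial_of_frontier_nonempty [PreconnectedSpace X] {Z : Set X}
    (h : (frontier Z).Nonempty) : Nontrivial X := by
  obtain ⟨⟨x, hx⟩, hZ⟩ := nonempty_frontier_iff.1 h
  obtain ⟨y, hy⟩ := ne_univ_iff_exists_notMem Z |>.1 hZ
  exact ⟨x, y, fun hxy => hy (hxy ▸ hx)⟩

end Topology

section Segment

variable {E : Type*} [NormedAddCommGroup E] [NormedSpace ℝ E]

theorem segment_inter_frontier_nonempty {A : Set E} {x y : E} (hx : x ∈ A) (hy : y ∉ A) :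
    (segment ℝ x y ∩ frontier A).Nonempty := by
  by_contra hempty
  have hsub : segment ℝ x y ⊆ interior A ∪ (closure A)ᶜ := fun w hw => by
    by_cases hwi : w ∈ interior A
    · exact .inl hwi
    · exact .inr fun hwc => hempty ⟨w, hw, hwc, hwi⟩
  have hxi : x ∈ interior A :=
    (hsub (left_mem_segment ℝ x y)).resolve_right (not_not.2 (subset_closure hx))
  refine hy (interior_subset ?_)
  exact (convex_segment x y).isPreconnected.subset_left_of_subset_union isOpen_interior
    isClosed_closure.isOpen_compl (disjoint_compl_right.mono_left interior_subset_closure) hsub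
    ⟨x, left_mem_segment ℝ x y, hxi⟩ (right_mem_segment ℝ x y)

theorem infDist_frontier_le_dist_of_mem_of_notMem {A : Set E} {x y : E} (hx : x ∈ A)
    (hy : y ∉ A) : infDist x (frontier A) ≤ dist x y := by
  obtain ⟨z, hzs, hzA⟩ := segment_inter_frontier_nonempty hx hy
  calc infDist x (frontier A) ≤ dist x z := infDist_le_dist_of_mem hzA
    _ ≤ dist x y := by linarith [dist_add_dist_of_mem_segment hzs, dist_nonneg (x := z) (y := y)]

theorem infDist_frontier_le_dist_of_notMem_of_mem {A : Set E} {x y : E} (hx : x ∉ A)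
    (hy : y ∈ A) : infDist x (frontier A) ≤ dist x y := by
  simpa using infDist_frontier_le_dist_of_mem_of_notMem (A := Aᶜ) hx (not_not.2 hy)

end Segment

section SignedDistance

variable {X : Type*} [PseudoMetricSpace X]

open Classical in
noncomputable def signedDistFrontier (Z : Set X) (x : X) : ℝ :=
  if x ∈ Z then -infDist x (frontier Z) else infDist x (frontier Z)

variable {Z : Set X} {x : X}

theorem abs_signedDistFrontier (Z : Set X) (x : X) :
    |signedDistFrontier Z x| = infDist x (frontier Z) := by
  unfold signedDistFrontier
  split_ifs <;> simp [abs_of_nonneg infDist_nonneg]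

theorem mem_of_signedDistFrontier_neg (h : signedDistFrontier Z x < 0) : x ∈ Z := by
  by_contra hx
  rw [signedDistFrontier, if_neg hx] at h
  exact h.not_ge infDist_nonneg

theorem notMem_of_signedDistFrontier_pos (h : 0 < signedDistFrontier Z x) : x ∉ Z := fun hx => by
  rw [signedDistFrontier, if_pos hx] at h
  linarith [infDist_nonneg (x := x) (s := frontier Z)]

theorem eq_signedDistFrontier_of_infDist_eq {v : ℝ} (hd : infDist x (frontier Z) = |v|)
    (hneg : v < 0 → x ∈ Z) (hpos : 0 < v → x ∉ Z) : v = signedDistFrontier Z x := by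
  rcases lt_trichotomy v 0 with hv | rfl | hv
  · rw [signedDistFrontier, if_pos (hneg hv), hd, abs_of_neg hv, neg_neg]
  · rw [eq_comm, ← abs_eq_zero, abs_signedDistFrontier, hd, abs_zero]
  · rw [signedDistFrontier, if_neg (hpos hv), hd, abs_of_pos hv]

/-- `Realizable p s` is definitionally `∃ Z, IsRealizer Z p s`. -/
def IsRealizer {ι : Type*} (Z : Set X) (p : ι → X) (s : ι → ℝ) : Prop :=
  IsClosed Z ∧ (frontier Z).Nonempty ∧ ∀ i, s i = signedDistFrontier Z (p i)

theorem isRealizer_snoc_iff {n : ℕ} {p : Fin n → X} {s : Fin n → ℝ} {v : ℝ} :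
    IsRealizer Z (Fin.snoc p x) (Fin.snoc s v) ↔
      IsRealizer Z p s ∧ v = signedDistFrontier Z x := by
  simp only [IsRealizer, Fin.forall_fin_succ', Fin.snoc_castSucc, Fin.snoc_last, and_assoc]

namespace IsRealizer

variable {ι : Type*} {p : ι → X} {s : ι → ℝ}

theorem infDist_frontier (hZ : IsRealizer Z p s) (i : ι) : infDist (p i) (frontier Z) = |s i| := by
  rw [hZ.2.2 i, abs_signedDistFrontier]

theorem mem_of_neg (hZ : IsRealizer Z p s) {i : ι} (hi : s i < 0) : p i ∈ Z :=
  mem_of_signedDistFrontier_neg (hZ.2.2 i ▸ hi)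

theorem notMem_of_pos (hZ : IsRealizer Z p s) {i : ι} (hi : 0 < s i) : p i ∉ Z :=
  notMem_of_signedDistFrontier_pos (hZ.2.2 i ▸ hi)

theorem le_infDist_frontier_of_forall_le {n : ℕ} {p : Fin n → X} {s : Fin n → ℝ} {r : ℝ}
    (hmin : ∀ v, (∃ Y, IsRealizer Y (Fin.snoc p x) (Fin.snoc s v)) → r ≤ |v|)
    (hZ : IsRealizer Z p s) : r ≤ infDist x (frontier Z) :=
  abs_signedDistFrontier Z x ▸ hmin _ ⟨Z, isRealizer_snoc_iff.2 ⟨hZ, rfl⟩⟩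

end IsRealizer

theorem isRealizer_iInter_union_iUnion_frontier {κ ι : Type*} [Finite κ] [Nonempty κ]
    {W : κ → Set X} (hW : ∀ k, IsClosed (W k)) (hne : ∀ k, (frontier (W k)).Nonempty)
    {p : ι → X} {s : ι → ℝ}
    (hle : ∀ i k, |s i| ≤ infDist (p i) (frontier (W k)))
    (hge : ∀ i, ∃ k, infDist (p i) (frontier (W k)) ≤ |s i|)
    (hneg : ∀ i, s i < 0 → ∀ k, p i ∈ W k)
    (hpos : ∀ i, 0 < s i → ∃ k, p i ∉ W k) :
    IsRealizer ((⋂ k, W k) ∪ ⋃ k, frontier (W k)) p s := by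
  have hfr := frontier_iInter_union_iUnion_frontier hW
  have hF : (⋃ k, frontier (W k)).Nonempty :=
    (hne (Classical.arbitrary κ)).mono (subset_iUnion _ _)
  refine ⟨(isClosed_iInter hW).union (isClosed_iUnion_of_finite fun _ => isClosed_frontier),
    by rw [hfr]; exact hF, fun i => ?_⟩
  have hd : infDist (p i) (⋃ k, frontier (W k)) = |s i| := by
    obtain ⟨k, hk⟩ := hge i
    refine le_antisymm ((infDist_le_infDist_of_subset (subset_iUnion _ k) (hne k)).trans hk) ?_
    rw [le_infDist hF]
    intro y hy
    obtain ⟨k', hy⟩ := mem_iUnion.1 hy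
    exact (hle i k').trans (infDist_le_dist_of_mem hy)
  refine eq_signedDistFrontier_of_infDist_eq (by rwa [hfr])
    (fun h => .inl (mem_iInter.2 (hneg i h))) fun h hmem => ?_
  obtain ⟨k, hk⟩ := hpos i h
  rcases hmem with hmem | hmem
  · exact hk (mem_iInter.1 hmem k)
  · rw [infDist_zero_of_mem hmem] at hd
    exact (abs_pos.2 h.ne').ne hd

end SignedDistance

namespace IsRealizer

variable {E : Type*} [NormedAddCommGroup E] [NormedSpace ℝ E] {Z Z' : Set E} {x : E}

theorem abs_le_dist_of_notMem_of_mem {ι : Type*} {p : ι → E} {s : ι → ℝ}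
    (hZ : IsRealizer Z p s) (hZ' : IsRealizer Z' p s) (hx : x ∉ Z) (hx' : x ∈ Z') (i : ι) :
    |s i| ≤ dist (p i) x := by
  rcases lt_trichotomy (s i) 0 with hi | hi | hi
  · rw [← hZ.infDist_frontier]
    exact infDist_frontier_le_dist_of_mem_of_notMem (hZ.mem_of_neg hi) hx
  · simp [hi]
  · rw [← hZ'.infDist_frontier]
    exact infDist_frontier_le_dist_of_notMem_of_mem (hZ'.notMem_of_pos hi) hx'

variable {n : ℕ} {p : Fin n → E} {s : Fin n → ℝ}

theorem snoc_union_singleton (hZ : IsRealizer Z p s) (hx : x ∉ Z)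
    (hfar : ∀ i, |s i| ≤ dist (p i) x) :
    IsRealizer (Z ∪ {x}) (Fin.snoc p x) (Fin.snoc s 0) := by
  have := nontrivial_of_frontier_nonempty hZ.2.1
  have hfr : frontier (Z ∪ {x}) = frontier Z ∪ {x} :=
    hZ.1.frontier_union_singleton fun h => hx (interior_subset h)
  refine isRealizer_snoc_iff.2 ⟨⟨hZ.1.union isClosed_singleton,
    hfr ▸ hZ.2.1.mono subset_union_left, fun i => ?_⟩, ?_⟩
  · have hd : infDist (p i) (frontier Z ∪ {x}) = |s i| := by
      refine le_antisymm ((infDist_le_infDist_of_subset subset_union_left hZ.2.1).trans_eq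
        (hZ.infDist_frontier i)) ((le_infDist (hZ.2.1.mono subset_union_left)).2 ?_)
      rintro y (hy | rfl)
      · exact hZ.infDist_frontier i ▸ infDist_le_dist_of_mem hy
      · exact hfar i
    refine eq_signedDistFrontier_of_infDist_eq (by rwa [hfr]) (fun h => .inl (hZ.mem_of_neg h)) ?_
    rintro h (hmem | rfl)
    · exact hZ.notMem_of_pos h hmem
    · have := hfar i
      rw [dist_self, abs_of_pos h] at this
      linarith
  · refine eq_signedDistFrontier_of_infDist_eq ?_ (fun h => (lt_irrefl 0 h).elim)
      fun h => (lt_irrefl 0 h).elim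
    rw [abs_zero, hfr]
    exact infDist_zero_of_mem (.inr rfl)

theorem mem_of_forall_le {r : ℝ}
    (hmin : ∀ v, (∃ Y, IsRealizer Y (Fin.snoc p x) (Fin.snoc s v)) → r ≤ |v|) (hr : 0 < r)
    (hZ : IsRealizer Z p s) (hZ' : IsRealizer Z' p s) (hx' : x ∈ Z') : x ∈ Z := by
  by_contra hx
  have h0 := hmin 0 ⟨_, hZ.snoc_union_singleton hx (hZ.abs_le_dist_of_notMem_of_mem hZ' hx hx')⟩
  rw [abs_zero] at h0
  linarith

end IsRealizer

theorem min_valid_values_jointly_realizable_general (d : ℕ) (n m : ℕ)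
    (p : Fin n → EuclideanSpace ℝ (Fin d)) (s : Fin n → ℝ) (h : Realizable p s)
    (q : Fin m → EuclideanSpace ℝ (Fin d)) (sstar : Fin m → ℝ)
    (hvalid : ∀ j, Realizable (Fin.snoc p (q j)) (Fin.snoc s (sstar j)))
    (hmin : ∀ j, ∀ v : ℝ, Realizable (Fin.snoc p (q j)) (Fin.snoc s v) →
      |sstar j| ≤ |v|) :
    Realizable (Sum.elim p q) (Sum.elim s sstar) := by
  obtain ⟨Z₀, hZ₀⟩ : ∃ Z, IsRealizer Z p s := h
  choose Z hZ using fun j => (hvalid j : ∃ Z, IsRealizer Z _ _)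
  have hZj (j : Fin m) := isRealizer_snoc_iff.1 (hZ j)
  set W : Option (Fin m) → Set (EuclideanSpace ℝ (Fin d)) := fun k => k.elim Z₀ Z
  have hW : ∀ k, IsRealizer (W k) p s := by
    rintro (_ | j)
    exacts [hZ₀, (hZj j).1]
  refine ⟨_, isRealizer_iInter_union_iUnion_frontier (fun k => (hW k).1) (fun k => (hW k).2.1)
    ?_ ?_ ?_ ?_⟩
  · rintro (i | j) k
    exacts [((hW k).infDist_frontier i).ge, (hW k).le_infDist_frontier_of_forall_le (hmin j)]
  · rintro (i | j)
    · exact ⟨none, (hZ₀.infDist_frontier i).le⟩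
    · exact ⟨some j, ((congrArg abs (hZj j).2).trans (abs_signedDistFrontier _ _)).ge⟩
  · rintro (i | j) hneg k
    · exact (hW k).mem_of_neg hneg
    · exact (hW k).mem_of_forall_le (hmin j) (abs_pos.2 hneg.ne) (hZj j).1
        (mem_of_signedDistFrontier_neg ((hZj j).2 ▸ hneg))
  · rintro (i | j) hpos
    · exact ⟨none, hZ₀.notMem_of_pos hpos⟩
    · exact ⟨some j, notMem_of_signedDistFrontier_pos ((hZj j).2 ▸ hpos)⟩

/-- **Minimum-radii corollary.** For `d = 2` or `d = 3`, let `(p, s)` be a realizable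
family and `q 1, …, q m` further points. If each `sstar j` is a minimum valid value at
`q j` (i.e. the family augmented by `(q j, sstar j)` alone is realizable, and `|sstar j|`
is minimal among all singly-augmenting valid values), then the complete family obtained
by adding all samples `(q j, sstar j)` at once is realizable. -/
theorem min_valid_values_jointly_realizable (d : ℕ) (hd : d = 2 ∨ d = 3) (n m : ℕ)
    (p : Fin n → EuclideanSpace ℝ (Fin d)) (s : Fin n → ℝ) (h : Realizable p s)
    (q : Fin m → EuclideanSpace ℝ (Fin d)) (sstar : Fin m → ℝ)
    (hvalid : ∀ j, Realizable (Fin.snoc p (q j)) (Fin.snoc s (sstar j)))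
    (hmin : ∀ j, ∀ v : ℝ, Realizable (Fin.snoc p (q j)) (Fin.snoc s v) →
      |sstar j| ≤ |v|) :
    Realizable (Sum.elim p q) (Sum.elim s sstar) :=
  min_valid_values_jointly_realizable_general d n m p s h q sstar hvalid hmin
end

section
/- Let (p₁, s₁), …, (pₙ, sₙ) be a geometrically consistent finite family of signed distance samples in ℝ^d, let A = ⋃_{i : sᵢ > 0} B(pᵢ, sᵢ) be the union of the closed balls of the positively-signed samples, let p ∈ A, and set s* = dist(p, ℝ^d \ A). Then there exists a point q with ‖q − p‖ = s* and ‖q − pᵢ‖ ≥ |sᵢ| for all i; that is, the sphere S(p, s*) contains a point not covered by the open ball of any input sample. -/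
/-!
A nearest point `q` of `Aᶜ` to `pt ∈ A` lies on the frontier of `A`: were it interior to `Aᶜ`,
moving it slightly towards `pt` would give a closer point of `Aᶜ`. A point of the frontier of `A`
is uncovered. It is not in the interior of `A`, so it lies outside every open positive ball; and it
is in the closure of the union of the open positive balls, which every open negative ball misses
by consistency (i).
-/

open Metric Set

section NearestPoint

variable {E : Type*} [NormedAddCommGroup E] [NormedSpace ℝ E]

theorem Metric.infDist_lt_dist_of_mem_interior {S : Set E} {x y : E} (hy : y ∈ interior S)
    (hxy : x ≠ y) : infDist x S < dist x y := by
  obtain ⟨ε, hε, hball⟩ := Metric.isOpen_iff.1 isOpen_interior y hy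
  obtain ⟨z, hyz, hzx⟩ := exists_dist_lt_lt hε (dist_pos.2 hxy.symm)
    (lt_add_of_pos_right (dist y x) hε)
  calc infDist x S ≤ dist x z :=
        infDist_le_dist_of_mem (interior_subset (hball (mem_ball'.2 hyz)))
    _ < dist x y := by rwa [dist_comm, dist_comm x]

theorem Metric.exists_mem_frontier_dist_eq_infDist_compl [ProperSpace E] {S : Set E} {x : E}
    (hx : x ∈ S) (hS : Sᶜ.Nonempty) : ∃ q ∈ frontier S, dist q x = infDist x Sᶜ := by
  obtain ⟨q, hq, hdist⟩ := exists_mem_closure_infDist_eq_dist hS x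
  refine ⟨q, ?_, by rw [dist_comm, hdist]⟩
  rw [frontier_eq_closure_inter_closure, closure_eq_compl_interior_compl]
  refine ⟨fun hq_int => ?_, hq⟩
  have hxq : x ≠ q := fun hxq => interior_subset hq_int (hxq ▸ hx)
  exact (infDist_lt_dist_of_mem_interior hq_int hxq).ne hdist

end NearestPoint

section SignedSamples

variable {d : ℕ} {ι : Type} {p : ι → EuclideanSpace ℝ (Fin d)} {s : ι → ℝ}

theorem GeomConsistent.nontrivial (h : GeomConsistent p s) {j : ι} (hj : s j ≠ 0) :
    Nontrivial (EuclideanSpace ℝ (Fin d)) := by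
  obtain ⟨q, hq, -⟩ := h.2 j
  refine nontrivial_of_ne q (p j) fun hqp => ?_
  rw [hqp, dist_self] at hq
  exact hj (abs_eq_zero.1 hq.symm)

theorem isBounded_iUnion_closedBall_pos [Finite ι] :
    Bornology.IsBounded (⋃ i, ⋃ (_ : 0 < s i), closedBall (p i) (s i)) :=
  Bornology.isBounded_iUnion.2 fun _ =>
    isBounded_closedBall.subset (iUnion_subset fun _ => subset_rfl)

theorem iUnion_closedBall_pos_subset_closure :
    (⋃ i, ⋃ (_ : 0 < s i), closedBall (p i) (s i)) ⊆
      closure (⋃ i, ⋃ (_ : 0 < s i), ball (p i) (s i)) := by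
  simp only [iUnion_subset_iff]
  intro i hi
  rw [← closure_ball (p i) hi.ne']
  exact closure_mono (subset_biUnion_of_mem (u := fun i => ball (p i) (s i)) hi)

theorem GeomConsistent.abs_le_dist_of_mem_frontier (h : GeomConsistent p s)
    {x : EuclideanSpace ℝ (Fin d)}
    (hx : x ∈ frontier (⋃ i, ⋃ (_ : 0 < s i), closedBall (p i) (s i))) (i : ι) :
    |s i| ≤ dist x (p i) := by
  rcases lt_trichotomy (s i) 0 with hneg | hzero | hpos
  · have hdisj : Disjoint (ball (p i) |s i|) (⋃ j, ⋃ (_ : 0 < s j), ball (p j) (s j)) := by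
      simp only [disjoint_iUnion_right]
      intro j hj
      simpa only [abs_of_pos hj] using (h.1 j i hj hneg).symm
    have hx_closure :=
      closure_mono iUnion_closedBall_pos_subset_closure (frontier_subset_closure hx)
    rw [closure_closure] at hx_closure
    exact not_lt.1 fun hlt => (hdisj.closure_right isOpen_ball).notMem_of_mem_left hlt hx_closure
  · simp [hzero]
  · have hball : ball (p i) (s i) ⊆ interior (⋃ j, ⋃ (_ : 0 < s j), closedBall (p j) (s j)) :=
      interior_maximal (ball_subset_closedBall.trans (subset_biUnion_of_mem
        (u := fun j => closedBall (p j) (s j)) hpos)) isOpen_ball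
    rw [abs_of_pos hpos]
    exact not_lt.1 fun hlt => hx.2 (hball hlt)

end SignedSamples

/-- Given a geometrically consistent family, a point `pt` in the union `A` of the closed
balls of the positively-signed samples, and `sstar = dist(pt, Aᶜ)`, the sphere
`S(pt, sstar)` has a point not covered by the open ball of any input sample. -/
theorem minimal_sphere_has_uncovered_point (d n : ℕ)
    (p : Fin n → EuclideanSpace ℝ (Fin d)) (s : Fin n → ℝ)
    (h : GeomConsistent p s) (A : Set (EuclideanSpace ℝ (Fin d)))
    (hA : A = ⋃ i : Fin n, ⋃ (_ : 0 < s i), Metric.closedBall (p i) (s i))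
    (pt : EuclideanSpace ℝ (Fin d)) (hpt : pt ∈ A) :
    ∃ q : EuclideanSpace ℝ (Fin d),
      dist q pt = Metric.infDist pt Aᶜ ∧ ∀ i, |s i| ≤ dist q (p i) := by
  subst hA
  obtain ⟨j, hj, -⟩ := mem_iUnion₂.1 hpt
  have := h.nontrivial hj.ne'
  have hcompl : (⋃ i, ⋃ (_ : 0 < s i), closedBall (p i) (s i))ᶜ.Nonempty :=
    nonempty_compl.2 fun huniv =>
      NormedSpace.unbounded_univ ℝ _ (huniv ▸ isBounded_iUnion_closedBall_pos)
  obtain ⟨q, hq, hdist⟩ := exists_mem_frontier_dist_eq_infDist_compl hpt hcompl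
  exact ⟨q, hdist, h.abs_le_dist_of_mem_frontier hq⟩
end
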